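/- arXiv:1904.08962 — 3 statements merged into one kernel-verified Lean document; each statement's English description precedes it below -/
import Mathlib

section
/- (Lagrangian decoupling.) For the N-arm constrained restless bandit with stochastic availability, Lagrange multiplier λ > 0 and budget M, the joint Lagrangian-relaxed value function decomposes as a sum of single-arm Lagrangian values: for every belief vector π ∈ [0,1]^N and availability vector y ∈ {0,1}^N, J^λ(π, y) = Mλ/(1−β) + Σ_{n=1}^N J^λ_n(π_n, y_n). -/
open Set

noncomputable section

/-- Expected immediate reward (success probability) at belief `π`. -/
def rhoB (ρ0 ρ1 π : ℝ) : ℝ := π * ρ0 + (1 - π) * ρ1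

/-- Belief update after a play resulting in success. -/
def Gam1 (p00 p10 ρ0 ρ1 π : ℝ) : ℝ :=
  (π * ρ0 * p00 + (1 - π) * ρ1 * p10) / (π * ρ0 + (1 - π) * ρ1)

/-- Belief update after a play resulting in failure. -/
def Gam0 (p00 p10 ρ0 ρ1 π : ℝ) : ℝ :=
  (π * (1 - ρ0) * p00 + (1 - π) * (1 - ρ1) * p10) /
    (π * (1 - ρ0) + (1 - π) * (1 - ρ1))

/-- Belief update without observation (natural Markov evolution). -/
def gam (p00 p10 π : ℝ) : ℝ := π * p00 + (1 - π) * p10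

/-- Joint Lagrangian-relaxed Bellman operator for the `N`-arm constrained
restless bandit with stochastic availability: the maximum is over feasible
actions (`a n = false` whenever `y n = false`); the play constraint `‖a‖₁ = M`
is relaxed with multiplier `lam`, and the next-state expectation is over
independent observation and availability outcomes of the arms. -/
def TJoint (N : ℕ) (p00 p10 ρ0 ρ1 θ11 θ01 θ00 : Fin N → ℝ) (β lam : ℝ) (M : ℕ)
    (J : (Fin N → ℝ) → (Fin N → Bool) → ℝ)
    (π : Fin N → ℝ) (y : Fin N → Bool) : ℝ :=
  (Finset.univ.filter (fun a : Fin N → Bool => ∀ n, y n = false → a n = false)).sup'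
    (by exact ⟨fun _ => false, by simp⟩)
    (fun a =>
      (∑ n, if a n then rhoB (ρ0 n) (ρ1 n) (π n) else 0)
        + lam * ((M : ℝ) - ∑ n, (if a n then (1:ℝ) else 0))
        + β * ∑ o : Fin N → Bool, ∑ y' : Fin N → Bool,
            (∏ n,
              (if a n then
                  (if o n then rhoB (ρ0 n) (ρ1 n) (π n)
                   else 1 - rhoB (ρ0 n) (ρ1 n) (π n))
                else (if o n then (1:ℝ) else 0))
              *
              (if y' n then
                  (if a n then θ11 n else if y n then θ01 n else θ00 n)
                else 1 - (if a n then θ11 n else if y n then θ01 n else θ00 n)))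
            * J (fun n =>
                  if a n then
                    (if o n then Gam1 (p00 n) (p10 n) (ρ0 n) (ρ1 n) (π n)
                     else Gam0 (p00 n) (p10 n) (ρ0 n) (ρ1 n) (π n))
                  else gam (p00 n) (p10 n) (π n)) y')

/-- Bounded on the joint belief space `[0,1]^N × {0,1}^N`. -/
def BddOnN (N : ℕ) (J : (Fin N → ℝ) → (Fin N → Bool) → ℝ) : Prop :=
  ∃ C : ℝ, ∀ π : Fin N → ℝ, (∀ n, π n ∈ Icc (0:ℝ) 1) → ∀ y : Fin N → Bool, |J π y| ≤ C

/-- Single-arm Lagrangian Bellman operator (play reward `ρ(π) − lam`,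
no subsidy). -/
def TLag1 (p00 p10 ρ0 ρ1 θ11 θ01 θ00 β lam : ℝ) (J : ℝ → Bool → ℝ) :
    ℝ → Bool → ℝ :=
  fun π y =>
    if y then
      max
        (rhoB ρ0 ρ1 π - lam
          + β * rhoB ρ0 ρ1 π *
              (θ11 * J (Gam1 p00 p10 ρ0 ρ1 π) true +
                (1 - θ11) * J (Gam1 p00 p10 ρ0 ρ1 π) false)
          + β * (1 - rhoB ρ0 ρ1 π) *
              (θ11 * J (Gam0 p00 p10 ρ0 ρ1 π) true +
                (1 - θ11) * J (Gam0 p00 p10 ρ0 ρ1 π) false))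
        (β * (θ01 * J (gam p00 p10 π) true + (1 - θ01) * J (gam p00 p10 π) false))
    else β * (θ00 * J (gam p00 p10 π) true + (1 - θ00) * J (gam p00 p10 π) false)

/-- Bounded on `[0,1] × {0,1}`. -/
def BddOnIcc (J : ℝ → Bool → ℝ) : Prop :=
  ∃ C : ℝ, ∀ π ∈ Icc (0:ℝ) 1, ∀ y : Bool, |J π y| ≤ C

/-! The relaxed problem has no coupling between arms: the payoff of a joint action is a sum of
per-arm payoffs plus the subsidy `λ M`, the arms evolve independently, and the feasible actions
form a product set. Hence `c + ∑ₙ Jₙ(πₙ, yₙ)` with `c = λ M + β c` is a bounded fixed point of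
the joint Bellman operator. That operator is a `β`-contraction on functions bounded on
`[0,1]^N × {0,1}^N`, because every transition kernel is a probability vector and the belief
updates preserve `[0,1]`; so this fixed point is `J`. -/

open Finset

section WeightedSums

variable {ι κ κ' : Type*} [Fintype ι] [DecidableEq ι] [Fintype κ] [Fintype κ']

theorem sum_prod_eq_one {w : ι → κ → ℝ} (hw : ∀ i, ∑ k, w i k = 1) :
    ∑ x : ι → κ, ∏ i, w i (x i) = 1 := by
  rw [← Fintype.prod_sum]
  exact prod_eq_one fun i _ => hw i

theorem sum_prod_mul_apply {w : ι → κ → ℝ} (hw : ∀ i, ∑ k, w i k = 1) (j : ι) (f : κ → ℝ) :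
    ∑ x : ι → κ, (∏ i, w i (x i)) * f (x j) = ∑ k, w j k * f k := by
  have hsplit : ∀ x : ι → κ,
      (∏ i, w i (x i)) * f (x j) = ∏ i, w i (x i) * (if i = j then f (x i) else 1) := by
    intro x
    rw [prod_mul_distrib, Fintype.prod_ite_eq']
  rw [sum_congr rfl fun x _ => hsplit x,
    ← Fintype.prod_sum fun i k => w i k * if i = j then f k else 1,
    Fintype.prod_eq_single j fun i hij => by simp [hij, hw]]
  simp

theorem sum_prod_mul_const_add_sum {w : ι → κ → ℝ} (hw : ∀ i, ∑ k, w i k = 1) (c : ℝ)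
    (f : ι → κ → ℝ) :
    ∑ x : ι → κ, (∏ i, w i (x i)) * (c + ∑ i, f i (x i)) = c + ∑ i, ∑ k, w i k * f i k := by
  simp only [mul_add, sum_add_distrib, mul_sum]
  rw [← sum_mul, sum_prod_eq_one hw, one_mul, sum_comm]
  exact congrArg _ (sum_congr rfl fun i _ => sum_prod_mul_apply hw i (f i))

theorem sum_sum_prod_mul_const_add_sum {A : ι → κ → ℝ} {B : ι → κ' → ℝ}
    (hA : ∀ i, ∑ k, A i k = 1) (hB : ∀ i, ∑ l, B i l = 1) (c : ℝ) (f : ι → κ → κ' → ℝ) :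
    ∑ o : ι → κ, ∑ z : ι → κ', (∏ i, A i (o i) * B i (z i)) * (c + ∑ i, f i (o i) (z i))
      = c + ∑ i, ∑ k, A i k * ∑ l, B i l * f i k l := by
  have inner : ∀ o : ι → κ,
      ∑ z : ι → κ', (∏ i, A i (o i) * B i (z i)) * (c + ∑ i, f i (o i) (z i))
        = (∏ i, A i (o i)) * (c + ∑ i, ∑ l, B i l * f i (o i) l) := by
    intro o
    simp only [prod_mul_distrib, mul_assoc, ← mul_sum]
    rw [sum_prod_mul_const_add_sum hB]
  rw [sum_congr rfl fun o _ => inner o]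
  exact sum_prod_mul_const_add_sum hA c fun i k => ∑ l, B i l * f i k l

theorem abs_sum_mul_le_of_sum_eq_one {α : Type*} {s : Finset α} {p F : α → ℝ} {C : ℝ}
    (hp : ∀ x ∈ s, 0 ≤ p x) (hp1 : ∑ x ∈ s, p x = 1) (hF : ∀ x ∈ s, |F x| ≤ C) :
    |∑ x ∈ s, p x * F x| ≤ C :=
  calc |∑ x ∈ s, p x * F x|
      ≤ ∑ x ∈ s, p x * C := (abs_sum_le_sum_abs _ _).trans <| sum_le_sum fun x hx => by
        rw [abs_mul, abs_of_nonneg (hp x hx)]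
        exact mul_le_mul_of_nonneg_left (hF x hx) (hp x hx)
    _ = C := by rw [← sum_mul, hp1, one_mul]

theorem abs_sum_sum_prod_mul_le {A : ι → κ → ℝ} {B : ι → κ' → ℝ}
    (hA0 : ∀ i k, 0 ≤ A i k) (hB0 : ∀ i l, 0 ≤ B i l)
    (hA : ∀ i, ∑ k, A i k = 1) (hB : ∀ i, ∑ l, B i l = 1)
    {F : (ι → κ) → (ι → κ') → ℝ} {C : ℝ} (hF : ∀ o z, |F o z| ≤ C) :
    |∑ o : ι → κ, ∑ z : ι → κ', (∏ i, A i (o i) * B i (z i)) * F o z| ≤ C := by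
  simp only [prod_mul_distrib, mul_assoc, ← mul_sum]
  refine abs_sum_mul_le_of_sum_eq_one (fun o _ => prod_nonneg fun i _ => hA0 i (o i))
    (sum_prod_eq_one hA) fun o _ => ?_
  exact abs_sum_mul_le_of_sum_eq_one (fun z _ => prod_nonneg fun i _ => hB0 i (z i))
    (sum_prod_eq_one hB) fun z _ => hF o z

end WeightedSums

theorem abs_sup'_sub_sup'_le {α : Type*} {s : Finset α} (hs : s.Nonempty) {f g : α → ℝ}
    {ε : ℝ} (h : ∀ a ∈ s, |f a - g a| ≤ ε) : |s.sup' hs f - s.sup' hs g| ≤ ε := by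
  rw [abs_sub_le_iff]
  constructor
  · refine sub_le_iff_le_add.2 (sup'_le _ _ fun a ha => ?_)
    have := le_sup' g ha
    linarith [(abs_sub_le_iff.1 (h a ha)).1]
  · refine sub_le_iff_le_add.2 (sup'_le _ _ fun a ha => ?_)
    have := le_sup' f ha
    linarith [(abs_sub_le_iff.1 (h a ha)).2]

def feasibleActions {N : ℕ} (y : Fin N → Bool) : Finset (Fin N → Bool) :=
  univ.filter fun a => ∀ n, y n = false → a n = false

theorem feasibleActions_nonempty {N : ℕ} (y : Fin N → Bool) : (feasibleActions y).Nonempty :=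
  ⟨fun _ => false, by simp [feasibleActions]⟩

theorem sup'_feasibleActions_sum {N : ℕ} (y : Fin N → Bool) (h : Fin N → Bool → ℝ) :
    (feasibleActions y).sup' (feasibleActions_nonempty y) (fun a => ∑ n, h n (a n))
      = ∑ n, if y n then max (h n true) (h n false) else h n false := by
  apply le_antisymm
  · refine sup'_le _ _ fun a ha => sum_le_sum fun n _ => ?_
    simp only [feasibleActions, Finset.mem_filter, Finset.mem_univ, true_and] at ha
    cases hy : y n
    · simp [ha n hy]
    · cases a n <;> simp
  · -- play each available arm exactly when playing it is the better option
    let a : Fin N → Bool := fun n => y n && decide (h n false ≤ h n true)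
    have ha : a ∈ feasibleActions y := by simp +contextual [feasibleActions, a]
    refine le_sup'_of_le _ ha (sum_le_sum fun n _ => ?_)
    cases hy : y n
    · simp [a, hy]
    · by_cases hle : h n false ≤ h n true <;> simp [a, hy, hle, le_of_not_ge]


theorem mul_add_one_sub_mul_mem_Icc {t a b : ℝ} (ht : t ∈ Icc (0:ℝ) 1)
    (ha : a ∈ Icc (0:ℝ) 1) (hb : b ∈ Icc (0:ℝ) 1) : t * a + (1 - t) * b ∈ Icc (0:ℝ) 1 := by
  simpa only [smul_eq_mul] using
    convex_Icc (0:ℝ) 1 ha hb ht.1 (sub_nonneg.2 ht.2) (add_sub_cancel t 1)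

theorem rhoB_mem_Icc {ρ0 ρ1 π : ℝ} (hρ0 : 0 < ρ0) (hρ01 : ρ0 < ρ1) (hρ1 : ρ1 < 1)
    (hπ : π ∈ Icc (0:ℝ) 1) : rhoB ρ0 ρ1 π ∈ Icc (0:ℝ) 1 :=
  mul_add_one_sub_mul_mem_Icc hπ ⟨hρ0.le, by linarith⟩ ⟨by linarith, hρ1.le⟩

theorem gam_mem_Icc {p00 p10 π : ℝ} (hp00 : p00 ∈ Icc (0:ℝ) 1) (hp10 : p10 ∈ Icc (0:ℝ) 1)
    (hπ : π ∈ Icc (0:ℝ) 1) : gam p00 p10 π ∈ Icc (0:ℝ) 1 :=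
  mul_add_one_sub_mul_mem_Icc hπ hp00 hp10

theorem mul_add_mul_div_add_mem_Icc {u v a b : ℝ} (hu : 0 ≤ u) (hv : 0 ≤ v)
    (ha : a ∈ Icc (0:ℝ) 1) (hb : b ∈ Icc (0:ℝ) 1) : (u * a + v * b) / (u + v) ∈ Icc (0:ℝ) 1 :=
  ⟨div_nonneg (by nlinarith [ha.1, hb.1]) (add_nonneg hu hv),
    div_le_one_of_le₀ (by nlinarith [ha.2, hb.2]) (add_nonneg hu hv)⟩

theorem Gam1_mem_Icc {p00 p10 ρ0 ρ1 π : ℝ} (hp00 : p00 ∈ Icc (0:ℝ) 1)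
    (hp10 : p10 ∈ Icc (0:ℝ) 1) (hρ0 : 0 < ρ0) (hρ01 : ρ0 < ρ1) (hπ : π ∈ Icc (0:ℝ) 1) :
    Gam1 p00 p10 ρ0 ρ1 π ∈ Icc (0:ℝ) 1 :=
  mul_add_mul_div_add_mem_Icc (mul_nonneg hπ.1 hρ0.le)
    (mul_nonneg (sub_nonneg.2 hπ.2) (by linarith)) hp00 hp10

theorem Gam0_mem_Icc {p00 p10 ρ0 ρ1 π : ℝ} (hp00 : p00 ∈ Icc (0:ℝ) 1)
    (hp10 : p10 ∈ Icc (0:ℝ) 1) (hρ01 : ρ0 < ρ1) (hρ1 : ρ1 < 1) (hπ : π ∈ Icc (0:ℝ) 1) :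
    Gam0 p00 p10 ρ0 ρ1 π ∈ Icc (0:ℝ) 1 :=
  mul_add_mul_div_add_mem_Icc (mul_nonneg hπ.1 (by linarith))
    (mul_nonneg (sub_nonneg.2 hπ.2) (by linarith)) hp00 hp10

/-- An arm that is not played yields the dummy observation `true` with probability one. -/
def obsWeight (ρ0 ρ1 π : ℝ) (play o : Bool) : ℝ :=
  if play then (if o then rhoB ρ0 ρ1 π else 1 - rhoB ρ0 ρ1 π) else (if o then 1 else 0)

def availProb (θ11 θ01 θ00 : ℝ) (play y : Bool) : ℝ :=
  if play then θ11 else if y then θ01 else θ00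

def bernoulliWeight (q : ℝ) (b : Bool) : ℝ := if b then q else 1 - q

def nextBelief (p00 p10 ρ0 ρ1 π : ℝ) (play o : Bool) : ℝ :=
  if play then (if o then Gam1 p00 p10 ρ0 ρ1 π else Gam0 p00 p10 ρ0 ρ1 π) else gam p00 p10 π

theorem sum_obsWeight (ρ0 ρ1 π : ℝ) (play : Bool) : ∑ o, obsWeight ρ0 ρ1 π play o = 1 := by
  cases play <;> simp [obsWeight]

theorem obsWeight_nonneg {ρ0 ρ1 π : ℝ} (hρ : rhoB ρ0 ρ1 π ∈ Icc (0:ℝ) 1) (play o : Bool) :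
    0 ≤ obsWeight ρ0 ρ1 π play o := by
  cases play <;> cases o <;> simp [obsWeight, hρ.1, hρ.2]

theorem sum_bernoulliWeight (q : ℝ) : ∑ b, bernoulliWeight q b = 1 := by
  simp [bernoulliWeight]

theorem bernoulliWeight_nonneg {q : ℝ} (hq : q ∈ Icc (0:ℝ) 1) (b : Bool) :
    0 ≤ bernoulliWeight q b := by
  cases b <;> simp [bernoulliWeight, hq.1, hq.2]

theorem availProb_mem_Icc {θ11 θ01 θ00 : ℝ} (hθ11 : θ11 ∈ Icc (0:ℝ) 1)
    (hθ01 : θ01 ∈ Icc (0:ℝ) 1) (hθ00 : θ00 ∈ Icc (0:ℝ) 1) (play y : Bool) :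
    availProb θ11 θ01 θ00 play y ∈ Icc (0:ℝ) 1 := by
  cases play <;> cases y <;> simpa [availProb]

theorem nextBelief_mem_Icc {p00 p10 ρ0 ρ1 π : ℝ} (hp00 : p00 ∈ Icc (0:ℝ) 1)
    (hp10 : p10 ∈ Icc (0:ℝ) 1) (hρ0 : 0 < ρ0) (hρ01 : ρ0 < ρ1) (hρ1 : ρ1 < 1)
    (hπ : π ∈ Icc (0:ℝ) 1) (play o : Bool) : nextBelief p00 p10 ρ0 ρ1 π play o ∈ Icc (0:ℝ) 1 := by
  cases play
  · exact gam_mem_Icc hp00 hp10 hπ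
  · cases o
    · exact Gam0_mem_Icc hp00 hp10 hρ01 hρ1 hπ
    · exact Gam1_mem_Icc hp00 hp10 hρ0 hρ01 hπ

def armQ (p00 p10 ρ0 ρ1 θ11 θ01 θ00 β lam : ℝ) (V : ℝ → Bool → ℝ) (π : ℝ) (y play : Bool) : ℝ :=
  (if play then rhoB ρ0 ρ1 π - lam else 0) +
    β * ∑ o, obsWeight ρ0 ρ1 π play o *
      ∑ y', bernoulliWeight (availProb θ11 θ01 θ00 play y) y' *
        V (nextBelief p00 p10 ρ0 ρ1 π play o) y'

theorem TLag1_eq_armQ (p00 p10 ρ0 ρ1 θ11 θ01 θ00 β lam : ℝ) (V : ℝ → Bool → ℝ) (π : ℝ)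
    (y : Bool) :
    TLag1 p00 p10 ρ0 ρ1 θ11 θ01 θ00 β lam V π y
      = if y then max (armQ p00 p10 ρ0 ρ1 θ11 θ01 θ00 β lam V π y true)
          (armQ p00 p10 ρ0 ρ1 θ11 θ01 θ00 β lam V π y false)
        else armQ p00 p10 ρ0 ρ1 θ11 θ01 θ00 β lam V π y false := by
  cases y
  · simp [TLag1, armQ, obsWeight, bernoulliWeight, availProb, nextBelief]
  · simp [TLag1, armQ, obsWeight, bernoulliWeight, availProb, nextBelief]
    congr 1
    ring

section Joint

variable {ι : Type*} [Fintype ι] [DecidableEq ι]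

def jointQ (p00 p10 ρ0 ρ1 θ11 θ01 θ00 : ι → ℝ) (β lam : ℝ) (M : ℕ)
    (J : (ι → ℝ) → (ι → Bool) → ℝ) (π : ι → ℝ) (y a : ι → Bool) : ℝ :=
  (∑ n, if a n then rhoB (ρ0 n) (ρ1 n) (π n) else 0)
    + lam * ((M : ℝ) - ∑ n, (if a n then (1:ℝ) else 0))
    + β * ∑ o : ι → Bool, ∑ y' : ι → Bool,
        (∏ n, obsWeight (ρ0 n) (ρ1 n) (π n) (a n) (o n) *
          bernoulliWeight (availProb (θ11 n) (θ01 n) (θ00 n) (a n) (y n)) (y' n))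
        * J (fun n => nextBelief (p00 n) (p10 n) (ρ0 n) (ρ1 n) (π n) (a n) (o n)) y'

theorem jointQ_const_add_sum (p00 p10 ρ0 ρ1 θ11 θ01 θ00 : ι → ℝ) (β lam : ℝ) (M : ℕ) (c : ℝ)
    (V : ι → ℝ → Bool → ℝ) (π : ι → ℝ) (y a : ι → Bool) :
    jointQ p00 p10 ρ0 ρ1 θ11 θ01 θ00 β lam M (fun q z => c + ∑ n, V n (q n) (z n)) π y a
      = lam * M + β * c + ∑ n, armQ (p00 n) (p10 n) (ρ0 n) (ρ1 n) (θ11 n) (θ01 n) (θ00 n)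
          β lam (V n) (π n) (y n) (a n) := by
  have hE := sum_sum_prod_mul_const_add_sum (fun n => sum_obsWeight (ρ0 n) (ρ1 n) (π n) (a n))
    (fun n => sum_bernoulliWeight (availProb (θ11 n) (θ01 n) (θ00 n) (a n) (y n))) c
    (fun n o y' => V n (nextBelief (p00 n) (p10 n) (ρ0 n) (ρ1 n) (π n) (a n) o) y')
  have hplay : (∑ n, if a n then rhoB (ρ0 n) (ρ1 n) (π n) - lam else 0)
      = (∑ n, if a n then rhoB (ρ0 n) (ρ1 n) (π n) else 0)
        - lam * ∑ n, (if a n then (1:ℝ) else 0) := by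
    rw [mul_sum, ← sum_sub_distrib]
    exact sum_congr rfl fun n _ => by split_ifs <;> ring
  simp only [jointQ, armQ, sum_add_distrib, ← mul_sum] at hE ⊢
  rw [hE, hplay]
  ring

theorem abs_jointQ_sub_le {p00 p10 ρ0 ρ1 θ11 θ01 θ00 : ι → ℝ} {β lam : ℝ} {M : ℕ}
    (hp00 : ∀ n, p00 n ∈ Icc (0:ℝ) 1) (hp10 : ∀ n, p10 n ∈ Icc (0:ℝ) 1)
    (hρ0 : ∀ n, 0 < ρ0 n) (hρ01 : ∀ n, ρ0 n < ρ1 n) (hρ1 : ∀ n, ρ1 n < 1)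
    (hθ11 : ∀ n, θ11 n ∈ Icc (0:ℝ) 1) (hθ01 : ∀ n, θ01 n ∈ Icc (0:ℝ) 1)
    (hθ00 : ∀ n, θ00 n ∈ Icc (0:ℝ) 1) (hβ : 0 ≤ β)
    {J G : (ι → ℝ) → (ι → Bool) → ℝ} {C : ℝ}
    (hJG : ∀ q : ι → ℝ, (∀ n, q n ∈ Icc (0:ℝ) 1) → ∀ z, |J q z - G q z| ≤ C)
    {π : ι → ℝ} (hπ : ∀ n, π n ∈ Icc (0:ℝ) 1) (y a : ι → Bool) :
    |jointQ p00 p10 ρ0 ρ1 θ11 θ01 θ00 β lam M J π y a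
      - jointQ p00 p10 ρ0 ρ1 θ11 θ01 θ00 β lam M G π y a| ≤ β * C := by
  simp only [jointQ, add_sub_add_left_eq_sub, ← mul_sub, ← sum_sub_distrib]
  rw [abs_mul, abs_of_nonneg hβ]
  refine mul_le_mul_of_nonneg_left (abs_sum_sum_prod_mul_le
    (fun n => obsWeight_nonneg (rhoB_mem_Icc (hρ0 n) (hρ01 n) (hρ1 n) (hπ n)) (a n))
    (fun n => bernoulliWeight_nonneg (availProb_mem_Icc (hθ11 n) (hθ01 n) (hθ00 n) (a n) (y n)))
    (fun n => sum_obsWeight _ _ _ (a n)) (fun n => sum_bernoulliWeight _)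
    fun o z => hJG _ (fun n => ?_) z) hβ
  exact nextBelief_mem_Icc (hp00 n) (hp10 n) (hρ0 n) (hρ01 n) (hρ1 n) (hπ n) (a n) (o n)

theorem TJoint_eq_sup'_jointQ (N : ℕ) (p00 p10 ρ0 ρ1 θ11 θ01 θ00 : Fin N → ℝ) (β lam : ℝ)
    (M : ℕ) (J : (Fin N → ℝ) → (Fin N → Bool) → ℝ) (π : Fin N → ℝ) (y : Fin N → Bool) :
    TJoint N p00 p10 ρ0 ρ1 θ11 θ01 θ00 β lam M J π y
      = (feasibleActions y).sup' (feasibleActions_nonempty y)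
          (jointQ p00 p10 ρ0 ρ1 θ11 θ01 θ00 β lam M J π y) :=
  rfl

end Joint

theorem TJoint_const_add_sum (N : ℕ) (p00 p10 ρ0 ρ1 θ11 θ01 θ00 : Fin N → ℝ) (β lam : ℝ)
    (M : ℕ) (c : ℝ) (V : Fin N → ℝ → Bool → ℝ) (π : Fin N → ℝ) (y : Fin N → Bool) :
    TJoint N p00 p10 ρ0 ρ1 θ11 θ01 θ00 β lam M (fun q z => c + ∑ n, V n (q n) (z n)) π y
      = lam * M + β * c + ∑ n, TLag1 (p00 n) (p10 n) (ρ0 n) (ρ1 n) (θ11 n) (θ01 n) (θ00 n)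
          β lam (V n) (π n) (y n) := by
  simp only [TJoint_eq_sup'_jointQ, jointQ_const_add_sum, ← add_sup',
    sup'_feasibleActions_sum, TLag1_eq_armQ]

theorem bddOnN_const_add_sum {N : ℕ} (c : ℝ) {V : Fin N → ℝ → Bool → ℝ}
    (hV : ∀ n, BddOnIcc (V n)) : BddOnN N fun q z => c + ∑ n, V n (q n) (z n) := by
  choose C hC using hV
  refine ⟨|c| + ∑ n, C n, fun q hq z => (abs_add_le _ _).trans (add_le_add_right ?_ _)⟩
  exact (abs_sum_le_sum_abs _ _).trans (sum_le_sum fun n _ => hC n _ (hq n) _)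

theorem TJoint_fixedPoint_unique {N : ℕ} {p00 p10 ρ0 ρ1 θ11 θ01 θ00 : Fin N → ℝ}
    {β lam : ℝ} {M : ℕ}
    (hp00 : ∀ n, p00 n ∈ Icc (0:ℝ) 1) (hp10 : ∀ n, p10 n ∈ Icc (0:ℝ) 1)
    (hρ0 : ∀ n, 0 < ρ0 n) (hρ01 : ∀ n, ρ0 n < ρ1 n) (hρ1 : ∀ n, ρ1 n < 1)
    (hθ11 : ∀ n, θ11 n ∈ Icc (0:ℝ) 1) (hθ01 : ∀ n, θ01 n ∈ Icc (0:ℝ) 1)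
    (hθ00 : ∀ n, θ00 n ∈ Icc (0:ℝ) 1) (hβ : β ∈ Ico (0:ℝ) 1)
    {J G : (Fin N → ℝ) → (Fin N → Bool) → ℝ} (hJb : BddOnN N J) (hGb : BddOnN N G)
    (hJ : ∀ π : Fin N → ℝ, (∀ n, π n ∈ Icc (0:ℝ) 1) → ∀ y : Fin N → Bool,
      TJoint N p00 p10 ρ0 ρ1 θ11 θ01 θ00 β lam M J π y = J π y)
    (hG : ∀ π : Fin N → ℝ, (∀ n, π n ∈ Icc (0:ℝ) 1) → ∀ y : Fin N → Bool,
      TJoint N p00 p10 ρ0 ρ1 θ11 θ01 θ00 β lam M G π y = G π y)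
    (π : Fin N → ℝ) (hπ : ∀ n, π n ∈ Icc (0:ℝ) 1) (y : Fin N → Bool) : J π y = G π y := by
  obtain ⟨CJ, hCJ⟩ := hJb
  obtain ⟨CG, hCG⟩ := hGb
  have hcontract : ∀ C, (∀ q : Fin N → ℝ, (∀ n, q n ∈ Icc (0:ℝ) 1) → ∀ z, |J q z - G q z| ≤ C) →
      ∀ q : Fin N → ℝ, (∀ n, q n ∈ Icc (0:ℝ) 1) → ∀ z, |J q z - G q z| ≤ β * C := by
    intro C hC q hq z
    rw [← hJ q hq z, ← hG q hq z, TJoint_eq_sup'_jointQ, TJoint_eq_sup'_jointQ]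
    exact abs_sup'_sub_sup'_le _ fun a _ => abs_jointQ_sub_le hp00 hp10 hρ0 hρ01 hρ1
      hθ11 hθ01 hθ00 hβ.1 hC hq z a
  have hiter : ∀ k : ℕ, ∀ q : Fin N → ℝ, (∀ n, q n ∈ Icc (0:ℝ) 1) → ∀ z,
      |J q z - G q z| ≤ β ^ k * (CJ + CG) := by
    intro k
    induction k with
    | zero =>
      intro q hq z
      simpa using (abs_sub _ _).trans (add_le_add (hCJ q hq z) (hCG q hq z))
    | succ k ih =>
      intro q hq z
      exact (hcontract _ ih q hq z).trans_eq (by ring)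
  have hlim : Filter.Tendsto (fun k : ℕ => β ^ k * (CJ + CG)) Filter.atTop (nhds 0) := by
    simpa using (tendsto_pow_atTop_nhds_zero_of_lt_one hβ.1 hβ.2).mul_const (CJ + CG)
  have := ge_of_tendsto' hlim fun k => hiter k π hπ y
  exact sub_eq_zero.1 (abs_nonpos_iff.1 this)

theorem stmt3_general (N : ℕ) (p00 p10 ρ0 ρ1 θ11 θ01 θ00 : Fin N → ℝ) (β lam : ℝ) (M : ℕ)
    (hp00 : ∀ n, p00 n ∈ Icc (0:ℝ) 1) (hp10 : ∀ n, p10 n ∈ Icc (0:ℝ) 1)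
    (hρ0 : ∀ n, 0 < ρ0 n) (hρ01 : ∀ n, ρ0 n < ρ1 n) (hρ1 : ∀ n, ρ1 n < 1)
    (hθ11 : ∀ n, θ11 n ∈ Icc (0:ℝ) 1) (hθ01 : ∀ n, θ01 n ∈ Icc (0:ℝ) 1)
    (hθ00 : ∀ n, θ00 n ∈ Icc (0:ℝ) 1)
    (hβ : β ∈ Ioo (0:ℝ) 1)
    -- `Jn n` is the unique bounded fixed point of the single-arm Lagrangian equation
    (Jn : Fin N → ℝ → Bool → ℝ)
    (hJnb : ∀ n, BddOnIcc (Jn n))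
    (hJnfix : ∀ n, ∀ π ∈ Icc (0:ℝ) 1, ∀ y : Bool,
      TLag1 (p00 n) (p10 n) (ρ0 n) (ρ1 n) (θ11 n) (θ01 n) (θ00 n) β lam (Jn n) π y
        = Jn n π y)
    -- `J` is the unique bounded fixed point of the joint relaxed Bellman equation
    (J : (Fin N → ℝ) → (Fin N → Bool) → ℝ)
    (hJb : BddOnN N J)
    (hJfix : ∀ π : Fin N → ℝ, (∀ n, π n ∈ Icc (0:ℝ) 1) → ∀ y : Fin N → Bool,
      TJoint N p00 p10 ρ0 ρ1 θ11 θ01 θ00 β lam M J π y = J π y) :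
    ∀ π : Fin N → ℝ, (∀ n, π n ∈ Icc (0:ℝ) 1) → ∀ y : Fin N → Bool,
      J π y = (M : ℝ) * lam / (1 - β) + ∑ n, Jn n (π n) (y n) := by
  have hc : lam * M + β * ((M : ℝ) * lam / (1 - β)) = M * lam / (1 - β) := by
    field_simp [(sub_pos.2 hβ.2).ne']
    ring
  refine TJoint_fixedPoint_unique hp00 hp10 hρ0 hρ01 hρ1 hθ11 hθ01 hθ00 (Ioo_subset_Ico_self hβ)
    hJb (bddOnN_const_add_sum _ hJnb) hJfix fun q hq z => ?_
  rw [TJoint_const_add_sum, hc]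
  exact congrArg _ (sum_congr rfl fun n _ => hJnfix n _ (hq n) _)

/-- **Lagrangian decoupling.** The joint Lagrangian-relaxed
value function decomposes as `J^λ(π,y) = Mλ/(1−β) + Σ_n J^λ_n(π_n, y_n)`. -/
theorem stmt3 (N : ℕ) (p00 p10 ρ0 ρ1 θ11 θ01 θ00 : Fin N → ℝ) (β lam : ℝ) (M : ℕ)
    (hp00 : ∀ n, p00 n ∈ Icc (0:ℝ) 1) (hp10 : ∀ n, p10 n ∈ Icc (0:ℝ) 1)
    (hρ0 : ∀ n, 0 < ρ0 n) (hρ01 : ∀ n, ρ0 n < ρ1 n) (hρ1 : ∀ n, ρ1 n < 1)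
    (hθ11 : ∀ n, θ11 n ∈ Icc (0:ℝ) 1) (hθ01 : ∀ n, θ01 n ∈ Icc (0:ℝ) 1)
    (hθ00 : ∀ n, θ00 n ∈ Icc (0:ℝ) 1)
    (hβ : β ∈ Ioo (0:ℝ) 1) (hlam : 0 < lam)
    -- `Jn n` is the unique bounded fixed point of the single-arm Lagrangian equation
    (Jn : Fin N → ℝ → Bool → ℝ)
    (hJnb : ∀ n, BddOnIcc (Jn n))
    (hJnfix : ∀ n, ∀ π ∈ Icc (0:ℝ) 1, ∀ y : Bool,
      TLag1 (p00 n) (p10 n) (ρ0 n) (ρ1 n) (θ11 n) (θ01 n) (θ00 n) β lam (Jn n) π y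
        = Jn n π y)
    -- `J` is the unique bounded fixed point of the joint relaxed Bellman equation
    (J : (Fin N → ℝ) → (Fin N → Bool) → ℝ)
    (hJb : BddOnN N J)
    (hJfix : ∀ π : Fin N → ℝ, (∀ n, π n ∈ Icc (0:ℝ) 1) → ∀ y : Fin N → Bool,
      TJoint N p00 p10 ρ0 ρ1 θ11 θ01 θ00 β lam M J π y = J π y) :
    ∀ π : Fin N → ℝ, (∀ n, π n ∈ Icc (0:ℝ) 1) → ∀ y : Fin N → Bool,
      J π y = (M : ℝ) * lam / (1 - β) + ∑ n, Jn n (π n) (y n) :=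
  stmt3_general N p00 p10 ρ0 ρ1 θ11 θ01 θ00 β lam M hp00 hp10 hρ0 hρ01 hρ1 hθ11 hθ01 hθ00 hβ Jn hJnb
    hJnfix J hJb hJfix
end
end

section
/- (Ordering of belief updates.) Suppose 0 < ρ0 < ρ1 < 1 and 0 ≤ p10 < p00 ≤ 1. Then for every π ∈ (0,1), the belief updates satisfy the strict ordering p10 < Γ1(π) < Γ0(π) < p00. -/
open Set

noncomputable section

/-! Both updates are weighted averages of `p00` and `p10`, with weights proportional to the
prior belief times the likelihood of the observation. The weight on `p00` is positive and less
than one, which gives the outer inequalities; it is larger after a failure than after a success,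
because `ρ0 < ρ1` makes failure relatively more likely in state 0, which gives the middle one. -/

section WeightedAvg

variable {K : Type*} [Field K] [LinearOrder K] [IsStrictOrderedRing K] {a b a' b' x y : K}

def weightedAvg (a b x y : K) : K := (a * x + b * y) / (a + b)

theorem lt_weightedAvg (ha : 0 < a) (hb : 0 ≤ b) (hxy : y < x) : y < weightedAvg a b x y := by
  rw [weightedAvg, lt_div_iff₀ (by positivity)]
  nlinarith

theorem weightedAvg_lt (ha : 0 ≤ a) (hb : 0 < b) (hxy : y < x) : weightedAvg a b x y < x := by
  rw [weightedAvg, div_lt_iff₀ (by positivity)]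
  nlinarith

theorem weightedAvg_lt_weightedAvg (hab : 0 < a + b) (hab' : 0 < a' + b')
    (h : a * b' < a' * b) (hxy : y < x) : weightedAvg a b x y < weightedAvg a' b' x y := by
  rw [weightedAvg, weightedAvg, div_lt_div_iff₀ hab hab']
  nlinarith [mul_pos (sub_pos.2 h) (sub_pos.2 hxy)]

end WeightedAvg

theorem Gam1_eq_weightedAvg (p00 p10 ρ0 ρ1 π : ℝ) :
    Gam1 p00 p10 ρ0 ρ1 π = weightedAvg (π * ρ0) ((1 - π) * ρ1) p00 p10 := rfl

theorem Gam0_eq_weightedAvg (p00 p10 ρ0 ρ1 π : ℝ) :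
    Gam0 p00 p10 ρ0 ρ1 π = weightedAvg (π * (1 - ρ0)) ((1 - π) * (1 - ρ1)) p00 p10 := rfl

theorem stmt17_general (p00 p10 ρ0 ρ1 : ℝ)
    (hρ0 : 0 < ρ0) (hρ01 : ρ0 < ρ1) (hρ1 : ρ1 < 1)
    (hp : p10 < p00) :
    ∀ π ∈ Ioo (0:ℝ) 1,
      p10 < Gam1 p00 p10 ρ0 ρ1 π ∧
      Gam1 p00 p10 ρ0 ρ1 π < Gam0 p00 p10 ρ0 ρ1 π ∧
      Gam0 p00 p10 ρ0 ρ1 π < p00 := by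
  rintro π ⟨hπ0, hπ1⟩
  have h1π : 0 < 1 - π := sub_pos.2 hπ1
  have h1ρ0 : 0 < 1 - ρ0 := by linarith
  have h1ρ1 : 0 < 1 - ρ1 := sub_pos.2 hρ1
  have hρ1_pos : 0 < ρ1 := hρ0.trans hρ01
  have hweights : π * ρ0 * ((1 - π) * (1 - ρ1)) < π * (1 - ρ0) * ((1 - π) * ρ1) := by
    nlinarith [mul_pos (mul_pos hπ0 h1π) (sub_pos.2 hρ01)]
  rw [Gam1_eq_weightedAvg, Gam0_eq_weightedAvg]
  exact ⟨lt_weightedAvg (by positivity) (by positivity) hp,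
    weightedAvg_lt_weightedAvg (by positivity) (by positivity) hweights hp,
    weightedAvg_lt (by positivity) (by positivity) hp⟩

/-- **Ordering of belief updates.** If `0 < ρ0 < ρ1 < 1` and
`0 ≤ p10 < p00 ≤ 1`, then for every `π ∈ (0,1)`,
`p10 < Γ1(π) < Γ0(π) < p00`. -/
theorem stmt17 (p00 p10 ρ0 ρ1 : ℝ)
    (hρ0 : 0 < ρ0) (hρ01 : ρ0 < ρ1) (hρ1 : ρ1 < 1)
    (hp10 : 0 ≤ p10) (hp : p10 < p00) (hp00 : p00 ≤ 1) :
    ∀ π ∈ Ioo (0:ℝ) 1,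
      p10 < Gam1 p00 p10 ρ0 ρ1 π ∧
      Gam1 p00 p10 ρ0 ρ1 π < Gam0 p00 p10 ρ0 ρ1 π ∧
      Gam0 p00 p10 ρ0 ρ1 π < p00 :=
  stmt17_general p00 p10 ρ0 ρ1 hρ0 hρ01 hρ1 hp
end
end

section
/- (Monotonicity and comparison of belief updates.) Suppose 0 < ρ0 < ρ1 < 1 and p10 ≤ p00. Then the maps γ, Γ1 and Γ0 are monotone nondecreasing on [0,1], and for every π ∈ [0,1] they satisfy Γ1(π) ≤ γ(π) ≤ Γ0(π). -/
/-!
Each update is "condition on the observation, then let the chain evolve":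
`Γ1 = γ ∘ posterior ρ0 ρ1` and `Γ0 = γ ∘ posterior (1 - ρ0) (1 - ρ1)`, where `posterior a b` is
Bayes' rule for likelihoods `a` in state 0 and `b` in state 1. Since `p10 ≤ p00`, `γ` is affine
with nonnegative slope, and Bayes' rule is monotone in the prior; it lowers the belief in state 0
when that state makes the observation less likely (`a ≤ b`, a success) and raises it otherwise
(a failure).
-/

open Set

noncomputable section

def posterior (a b π : ℝ) : ℝ := π * a / (π * a + (1 - π) * b)

lemma mixture_pos {a b π : ℝ} (ha : 0 < a) (hb : 0 < b) (hπ : π ∈ Icc (0 : ℝ) 1) :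
    0 < π * a + (1 - π) * b := by
  obtain ⟨hπ0, hπ1⟩ := hπ
  rcases hπ0.eq_or_lt with rfl | hπ0
  · simpa using hb
  · nlinarith

lemma gam_monotone {p00 p10 : ℝ} (hp : p10 ≤ p00) : Monotone (gam p00 p10) := by
  intro x y hxy
  simp only [gam]
  nlinarith

lemma posterior_monotoneOn {a b : ℝ} (ha : 0 < a) (hb : 0 < b) :
    MonotoneOn (posterior a b) (Icc 0 1) := by
  intro x hx y hy hxy
  rw [posterior, posterior, div_le_div_iff₀ (mixture_pos ha hb hx) (mixture_pos ha hb hy)]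
  nlinarith [mul_nonneg (sub_nonneg.2 hxy) (mul_pos ha hb).le]

lemma posterior_le_self {a b π : ℝ} (ha : 0 < a) (hab : a ≤ b) (hπ : π ∈ Icc (0 : ℝ) 1) :
    posterior a b π ≤ π := by
  rw [posterior, div_le_iff₀ (mixture_pos ha (ha.trans_le hab) hπ)]
  nlinarith [mul_nonneg (mul_nonneg hπ.1 (sub_nonneg.2 hπ.2)) (sub_nonneg.2 hab)]

lemma le_posterior_self {a b π : ℝ} (hb : 0 < b) (hba : b ≤ a) (hπ : π ∈ Icc (0 : ℝ) 1) :
    π ≤ posterior a b π := by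
  rw [posterior, le_div_iff₀ (mixture_pos (hb.trans_le hba) hb hπ)]
  nlinarith [mul_nonneg (mul_nonneg hπ.1 (sub_nonneg.2 hπ.2)) (sub_nonneg.2 hba)]

lemma gam_posterior {p00 p10 a b π : ℝ} (h : π * a + (1 - π) * b ≠ 0) :
    gam p00 p10 (posterior a b π) =
      (π * a * p00 + (1 - π) * b * p10) / (π * a + (1 - π) * b) := by
  rw [gam, posterior]
  field_simp
  ring

lemma eqOn_gam_comp_posterior {p00 p10 a b : ℝ} (ha : 0 < a) (hb : 0 < b) :
    EqOn (gam p00 p10 ∘ posterior a b)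
      (fun π ↦ (π * a * p00 + (1 - π) * b * p10) / (π * a + (1 - π) * b)) (Icc 0 1) :=
  fun _ hπ ↦ gam_posterior (mixture_pos ha hb hπ).ne'

theorem stmt19_general (p00 p10 ρ0 ρ1 : ℝ)
    (hρ0 : 0 < ρ0) (hρ01 : ρ0 < ρ1) (hρ1 : ρ1 < 1)
    (hp : p10 ≤ p00) :
    MonotoneOn (gam p00 p10) (Icc (0:ℝ) 1)
    ∧ MonotoneOn (Gam1 p00 p10 ρ0 ρ1) (Icc (0:ℝ) 1)
    ∧ MonotoneOn (Gam0 p00 p10 ρ0 ρ1) (Icc (0:ℝ) 1)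
    ∧ (∀ π ∈ Icc (0:ℝ) 1,
        Gam1 p00 p10 ρ0 ρ1 π ≤ gam p00 p10 π ∧
        gam p00 p10 π ≤ Gam0 p00 p10 ρ0 ρ1 π) := by
  have hγ := gam_monotone hp
  have hρ1pos : 0 < ρ1 := hρ0.trans hρ01
  have hfail0 : 0 < 1 - ρ0 := by linarith
  have hfail1 : 0 < 1 - ρ1 := by linarith
  have hΓ1 : EqOn (gam p00 p10 ∘ posterior ρ0 ρ1) (Gam1 p00 p10 ρ0 ρ1) (Icc 0 1) :=
    eqOn_gam_comp_posterior hρ0 hρ1pos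
  have hΓ0 : EqOn (gam p00 p10 ∘ posterior (1 - ρ0) (1 - ρ1)) (Gam0 p00 p10 ρ0 ρ1) (Icc 0 1) :=
    eqOn_gam_comp_posterior hfail0 hfail1
  refine ⟨hγ.monotoneOn _,
    (hγ.comp_monotoneOn (posterior_monotoneOn hρ0 hρ1pos)).congr hΓ1,
    (hγ.comp_monotoneOn (posterior_monotoneOn hfail0 hfail1)).congr hΓ0,
    fun π hπ ↦ ⟨?_, ?_⟩⟩
  · rw [← hΓ1 hπ]
    exact hγ (posterior_le_self hρ0 hρ01.le hπ)
  · rw [← hΓ0 hπ]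
    exact hγ (le_posterior_self hfail1 (by linarith) hπ)

/-- **Monotonicity and comparison of belief updates.** If
`0 < ρ0 < ρ1 < 1` and `p10 ≤ p00` (with `p00, p10 ∈ [0,1]`), then `γ`, `Γ1`
and `Γ0` are monotone nondecreasing on `[0,1]`, and
`Γ1(π) ≤ γ(π) ≤ Γ0(π)` for every `π ∈ [0,1]`. -/
theorem stmt19 (p00 p10 ρ0 ρ1 : ℝ)
    (hp00 : p00 ∈ Icc (0:ℝ) 1) (hp10 : p10 ∈ Icc (0:ℝ) 1)
    (hρ0 : 0 < ρ0) (hρ01 : ρ0 < ρ1) (hρ1 : ρ1 < 1)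
    (hp : p10 ≤ p00) :
    MonotoneOn (gam p00 p10) (Icc (0:ℝ) 1)
    ∧ MonotoneOn (Gam1 p00 p10 ρ0 ρ1) (Icc (0:ℝ) 1)
    ∧ MonotoneOn (Gam0 p00 p10 ρ0 ρ1) (Icc (0:ℝ) 1)
    ∧ (∀ π ∈ Icc (0:ℝ) 1,
        Gam1 p00 p10 ρ0 ρ1 π ≤ gam p00 p10 π ∧
        gam p00 p10 π ≤ Gam0 p00 p10 ρ0 ρ1 π) :=
  stmt19_general p00 p10 ρ0 ρ1 hρ0 hρ01 hρ1 hp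
end
end
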